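/- arXiv:2002.07249 — 4 statements merged into one kernel-verified Lean document; each statement's English description precedes it below -/
import Mathlib

section
/- Let $G=(V,E)$ be a finite simple graph, $w: V \to \mathbb{C}$ a weight function, and suppose there exists $\rho: V \to \mathbb{R}_{>0}$ such that for every vertex $v$, $\sum_{u\in\mathcal{N}_v} |w(u)| e^{\rho(u)} \le \rho(v)$, where $\mathcal{N}_v = \{v\}\cup\{u : \{u,v\}\in E\}$. Then the independence polynomial $\mathrm{Ind}_G(w) = \sum_{S\subseteq V \text{ independent}} \prod_{v\in S} w(v)$ is nonzero. -/
/-!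
Dobrushin's argument. Write `Z A` for the independence polynomial of the graph induced on `A` and
`a v = ‖w v‖ e^{ρ v}`. Splitting by whether `v` is used gives `Z A = Z (A - v) + w v Z (A - N[v])`.
By strong induction on `A` one shows `‖Z (A - v)‖ ≤ e^{a v} ‖Z A‖`: removing the neighbours of `v`
one at a time, the induction hypothesis gives `‖w v Z (A - N[v])‖ ≤ ‖w v‖ e^{ρ v - a v} ‖Z (A - v)‖
= a v e^{-a v} ‖Z (A - v)‖`, and `1 - a e^{-a} ≥ e^{-a}`. Removing all vertices one at a time then
gives `1 = Z ∅ ≤ (∏ e^{a v}) ‖Z V‖`.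
-/

open Finset Real

theorem Finset.apply_sdiff_le_prod_mul_of_erase_le {α R : Type*} [DecidableEq α] [CommSemiring R]
    [PartialOrder R] [IsOrderedRing R] {f : Finset α → R} {c : α → R} (hc : ∀ a, 0 ≤ c a)
    {A : Finset α} (hf : ∀ B ⊆ A, ∀ a ∈ B, f (B.erase a) ≤ c a * f B) {D : Finset α}
    (hD : D ⊆ A) : f (A \ D) ≤ (∏ a ∈ D, c a) * f A := by
  induction D using Finset.induction_on with
  | empty => simp
  | insert a D haD ih =>
    have hDA : D ⊆ A := (subset_insert a D).trans hD
    calc f (A \ insert a D) = f ((A \ D).erase a) := by rw [sdiff_insert]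
      _ ≤ c a * f (A \ D) := hf _ sdiff_subset a (mem_sdiff.2 ⟨hD (mem_insert_self a D), haD⟩)
      _ ≤ c a * ((∏ b ∈ D, c b) * f A) := mul_le_mul_of_nonneg_left (ih hDA) (hc a)
      _ = (∏ b ∈ insert a D, c b) * f A := by rw [prod_insert haD, mul_assoc]

theorem Real.le_exp_mul_of_le_add_mul_exp_neg {x y t : ℝ} (hx : 0 ≤ x)
    (h : x ≤ y + t * exp (-t) * x) : x ≤ exp t * y := by
  have hscaled : exp t * x ≤ exp t * y + t * x :=
    calc exp t * x ≤ exp t * (y + t * exp (-t) * x) := by gcongr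
      _ = exp t * y + t * x := by rw [exp_neg]; field_simp
  nlinarith [add_one_le_exp t]

namespace SimpleGraph

variable {V : Type*} (G : SimpleGraph V)

lemma forall_mem_insert_not_adj_iff [DecidableEq V] {v : V} {T : Finset V} :
    (∀ a ∈ insert v T, ∀ b ∈ insert v T, ¬ G.Adj a b) ↔
      (∀ a ∈ T, ∀ b ∈ T, ¬ G.Adj a b) ∧ ∀ u ∈ T, ¬ G.Adj v u := by
  simp only [forall_mem_insert, G.adj_comm _ v, G.irrefl, not_false_eq_true, true_and,
    forall_and]
  tauto

variable [DecidableRel G.Adj]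

section Recursion

variable {R : Type*} [CommSemiring R] (w : V → R)

noncomputable def indepPoly (A : Finset V) : R :=
  ∑ S ∈ A.powerset.filter (fun S : Finset V => ∀ u ∈ S, ∀ v ∈ S, ¬ G.Adj u v), ∏ v ∈ S, w v

lemma indepPoly_empty : G.indepPoly w ∅ = 1 := by
  simp [indepPoly, filter_singleton]

lemma indepPoly_eq_erase_add [DecidableEq V] {A : Finset V} {v : V} (hv : v ∈ A) :
    G.indepPoly w A = G.indepPoly w (A.erase v) +
      w v * G.indepPoly w ((A.erase v).filter (¬ G.Adj v ·)) := by
  have hvA : v ∉ A.erase v := notMem_erase v A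
  rw [← insert_erase hv]
  simp only [indepPoly, sum_filter]
  rw [sum_powerset_insert hvA, erase_insert hvA, mul_sum]
  congr 1
  rw [← sum_subset (powerset_mono.2 (filter_subset (¬ G.Adj v ·) (A.erase v)))]
  · refine sum_congr rfl fun t ht => ?_
    simp only [mem_powerset, subset_iff, mem_filter] at ht
    have hvt : v ∉ t := fun h => hvA (ht h).1
    have hnadj : ∀ u ∈ t, ¬ G.Adj v u := fun u hu => (ht hu).2
    simp only [G.forall_mem_insert_not_adj_iff, and_iff_left hnadj, prod_insert hvt, mul_ite,
      mul_zero]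
  · intro t ht hnot
    refine if_neg ?_
    rw [G.forall_mem_insert_not_adj_iff]
    rintro ⟨-, hnadj⟩
    exact hnot (mem_powerset.2 fun u hu => mem_filter.2 ⟨mem_powerset.1 ht hu, hnadj u hu⟩)

end Recursion

variable [Fintype V] [DecidableEq V] {𝕜 : Type*} [NormedField 𝕜] {w : V → 𝕜} {ρ : V → ℝ}

lemma sum_neighborFinset_le
    (h : ∀ v, ∑ u ∈ insert v (G.neighborFinset v), ‖w u‖ * exp (ρ u) ≤ ρ v) (v : V) :
    ∑ u ∈ G.neighborFinset v, ‖w u‖ * exp (ρ u) ≤ ρ v - ‖w v‖ * exp (ρ v) := by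
  have := h v
  rw [sum_insert (G.notMem_neighborFinset_self v)] at this
  linarith

lemma norm_indepPoly_erase_le_of_forall_ssubset
    (h : ∀ v, ∑ u ∈ insert v (G.neighborFinset v), ‖w u‖ * exp (ρ u) ≤ ρ v) {A : Finset V}
    (ih : ∀ B ⊂ A, ∀ u ∈ B,
      ‖G.indepPoly w (B.erase u)‖ ≤ exp (‖w u‖ * exp (ρ u)) * ‖G.indepPoly w B‖)
    {v : V} (hv : v ∈ A) :
    ‖G.indepPoly w (A.erase v)‖ ≤ exp (‖w v‖ * exp (ρ v)) * ‖G.indepPoly w A‖ := by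
  set a := ‖w v‖ * exp (ρ v)
  set A' := A.erase v
  have hB : ‖G.indepPoly w (A'.filter (¬ G.Adj v ·))‖ ≤ exp (ρ v - a) * ‖G.indepPoly w A'‖ :=
    calc ‖G.indepPoly w (A'.filter (¬ G.Adj v ·))‖
        = ‖G.indepPoly w (A' \ A'.filter (G.Adj v ·))‖ := by rw [filter_not]
      _ ≤ (∏ u ∈ A'.filter (G.Adj v ·), exp (‖w u‖ * exp (ρ u))) * ‖G.indepPoly w A'‖ :=
        apply_sdiff_le_prod_mul_of_erase_le (f := fun B => ‖G.indepPoly w B‖)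
          (fun _ => (exp_pos _).le)
          (fun B hB => ih B (hB.trans_ssubset (erase_ssubset hv)))
          (filter_subset _ _)
      _ ≤ exp (ρ v - a) * ‖G.indepPoly w A'‖ := by
        rw [← exp_sum]
        gcongr
        refine le_trans (sum_le_sum_of_subset_of_nonneg ?_ fun _ _ _ => by positivity)
          (G.sum_neighborFinset_le h v)
        intro u hu
        simpa using (mem_filter.1 hu).2
  refine le_exp_mul_of_le_add_mul_exp_neg (norm_nonneg _) ?_
  calc ‖G.indepPoly w A'‖
      = ‖G.indepPoly w A - w v * G.indepPoly w (A'.filter (¬ G.Adj v ·))‖ := by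
        rw [G.indepPoly_eq_erase_add w hv, add_sub_cancel_right]
    _ ≤ ‖G.indepPoly w A‖ + ‖w v‖ * (exp (ρ v - a) * ‖G.indepPoly w A'‖) := by
        grw [norm_sub_le, norm_mul, hB]
    _ = ‖G.indepPoly w A‖ + a * exp (-a) * ‖G.indepPoly w A'‖ := by
        rw [exp_sub, exp_neg]; ring

theorem norm_indepPoly_erase_le
    (h : ∀ v, ∑ u ∈ insert v (G.neighborFinset v), ‖w u‖ * exp (ρ u) ≤ ρ v) (A : Finset V) :
    ∀ v ∈ A, ‖G.indepPoly w (A.erase v)‖ ≤ exp (‖w v‖ * exp (ρ v)) * ‖G.indepPoly w A‖ := by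
  induction A using Finset.strongInduction with
  | H A ih => exact fun v hv => G.norm_indepPoly_erase_le_of_forall_ssubset h ih hv

theorem indepPoly_ne_zero
    (h : ∀ v, ∑ u ∈ insert v (G.neighborFinset v), ‖w u‖ * exp (ρ u) ≤ ρ v) (A : Finset V) :
    G.indepPoly w A ≠ 0 := by
  have := apply_sdiff_le_prod_mul_of_erase_le (f := fun B => ‖G.indepPoly w B‖)
    (fun _ => (exp_pos _).le)
    (fun B _ => G.norm_indepPoly_erase_le h B) (subset_refl A)
  rw [sdiff_self, bot_eq_empty, indepPoly_empty, norm_one] at this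
  refine norm_ne_zero_iff.1 fun h0 => ?_
  rw [h0, mul_zero] at this
  exact not_le.2 zero_lt_one this

end SimpleGraph

theorem stmt_4_general {V : Type*} [Fintype V] [DecidableEq V]
    (G : SimpleGraph V) [DecidableRel G.Adj] (w : V → ℂ)
    (ρ : V → ℝ)
    (h : ∀ v, ∑ u ∈ insert v (G.neighborFinset v), ‖w u‖ * Real.exp (ρ u) ≤ ρ v) :
    ∑ S ∈ Finset.univ.powerset.filter
        (fun S : Finset V => ∀ u ∈ S, ∀ v ∈ S, ¬ G.Adj u v),
      ∏ v ∈ S, w v ≠ 0 := by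
  -- the statement decides the filter predicate through `Fintype V`, `indepPoly` through `Finset`
  convert G.indepPoly_ne_zero h univ using 1
  unfold SimpleGraph.indepPoly
  congr

/-- Dobrushin / Kotecký–Preiss criterion: if there is
`ρ : V → ℝ_{>0}` with `∑_{u ∈ N(v)} |w(u)| e^{ρ(u)} ≤ ρ(v)` for every vertex
`v`, then the independence polynomial `∑_{S independent} ∏_{v ∈ S} w(v)` is
nonzero. -/
theorem stmt_4 {V : Type*} [Fintype V] [DecidableEq V]
    (G : SimpleGraph V) [DecidableRel G.Adj] (w : V → ℂ)
    (ρ : V → ℝ) (hρ : ∀ v, 0 < ρ v)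
    (h : ∀ v, ∑ u ∈ insert v (G.neighborFinset v), ‖w u‖ * Real.exp (ρ u) ≤ ρ v) :
    ∑ S ∈ Finset.univ.powerset.filter
        (fun S : Finset V => ∀ u ∈ S, ∀ v ∈ S, ¬ G.Adj u v),
      ∏ v ∈ S, w v ≠ 0 :=
  stmt_4_general G w ρ h
end

section
/- Let $p(z) = \sum_{s=0}^m c_s z^s$ be a complex polynomial and $\beta > 1$ a real number such that $p(z) \ne 0$ whenever $|z| < \beta$. Let $f$ be a branch of $\ln p$ on the disc $|z| < \beta$ and let $T_k(z) = f(0) + \sum_{s=1}^k \frac{f^{(s)}(0)}{s!} z^s$ be its degree-$k$ Taylor polynomial at $0$. Then $|f(1) - T_k(1)| \le \frac{m}{(k+1)\beta^k(\beta - 1)}$. -/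
/-!
Write `p(z) = p(0) ∏ (1 + w z)`, where `w = -1/r` runs over the roots `r` of `p`, so that
`‖w‖ ≤ 1/β`. Two holomorphic logarithms of `p` on the disc differ by a constant, hence
`f(z) = f(0) + ∑ log (1 + w z)` there, and expanding each `log (1 + w z)` in its power series shows
that `T_k(1) = f(0) + ∑ logTaylor (k + 1) w`. The error is thus a sum of at most `m` remainders
of the series of `log (1 + w)`, each at most
`‖w‖^(k+1) / ((k+1) (1 - ‖w‖)) ≤ 1 / ((k+1) β^k (β-1))`.
-/

open Complex FormalMultilinearSeries Polynomial
open scoped Nat NNReal ENNReal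

theorem HasFPowerSeriesAt.iteratedDeriv_ofScalars {𝕜 : Type*} [NontriviallyNormedField 𝕜]
    [CompleteSpace 𝕜] {f : 𝕜 → 𝕜} {c : ℕ → 𝕜} {x : 𝕜}
    (h : HasFPowerSeriesAt f (ofScalars 𝕜 c) x) (n : ℕ) : iteratedDeriv n f x = n ! * c n := by
  obtain ⟨r, h⟩ := h
  rw [iteratedDeriv_eq_iteratedFDeriv, ← h.factorial_smul 1 n, ofScalars_apply_eq]
  simp

theorem Multiset.hasFPowerSeriesOnBall_sum_ofScalars {𝕜 ι : Type*} [NontriviallyNormedField 𝕜]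
    {M : Multiset ι} {f : ι → 𝕜 → 𝕜} {c : ι → ℕ → 𝕜} {x : 𝕜} {r : ℝ≥0∞} (hr : 0 < r)
    (h : ∀ i ∈ M, HasFPowerSeriesOnBall (f i) (ofScalars 𝕜 (c i)) x r) :
    HasFPowerSeriesOnBall (fun z ↦ (M.map fun i ↦ f i z).sum)
      (ofScalars 𝕜 fun n ↦ (M.map fun i ↦ c i n).sum) x r := by
  induction M using Multiset.induction with
  | empty =>
    convert (hasFPowerSeriesOnBall_const (c := (0 : 𝕜)) (e := x)).mono hr le_top
    · simp
    · exact (ofScalars_series_eq_zero_of_scalar_zero 𝕜 𝕜).trans (by simp)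
  | cons a M ih =>
    simp only [Multiset.map_cons, Multiset.sum_cons]
    exact ofScalars_add 𝕜 (c a) _ ▸ (h a (M.mem_cons_self a)).add
      (ih fun i hi ↦ h i (Multiset.mem_cons_of_mem hi))

theorem Multiset.norm_sum_map_le_card_mul {ι E : Type*} [SeminormedAddCommGroup E]
    {M : Multiset ι} {g : ι → E} {C : ℝ} (h : ∀ i ∈ M, ‖g i‖ ≤ C) :
    ‖(M.map g).sum‖ ≤ M.card * C := by
  calc _ ≤ (M.map fun i ↦ ‖g i‖).sum := by
        simpa only [Multiset.map_map, Function.comp_def] using norm_multiset_sum_le (M.map g)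
    _ ≤ (M.map fun _ ↦ C).sum := Multiset.sum_map_le_sum_map _ _ h
    _ = M.card * C := by simp

theorem IsOpen.eqOn_of_exp_eq {U : Set ℂ} {g h : ℂ → ℂ} {x : ℂ} (hU : IsOpen U)
    (hU' : IsPreconnected U) (hg : DifferentiableOn ℂ g U) (hh : DifferentiableOn ℂ h U)
    (hexp : ∀ z ∈ U, exp (g z) = exp (h z)) (hx : x ∈ U) (hgh : g x = h x) :
    Set.EqOn g h U := by
  refine hU.eqOn_of_deriv_eq hU' hg hh (fun z hz ↦ ?_) hx hgh
  have hexp_nhds : (fun z ↦ exp (g z)) =ᶠ[nhds z] fun z ↦ exp (h z) :=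
    Filter.eventually_of_mem (hU.mem_nhds hz) hexp
  have hderiv := (hg.differentiableAt (hU.mem_nhds hz)).hasDerivAt.cexp.deriv
  rw [hexp_nhds.deriv_eq, (hh.differentiableAt (hU.mem_nhds hz)).hasDerivAt.cexp.deriv,
    hexp z hz] at hderiv
  exact (mul_left_cancel₀ (exp_ne_zero _) hderiv).symm

theorem hasFPowerSeriesOnBall_log_one_add_mul {w : ℂ} {r : ℝ≥0} (hr : 0 < r)
    (hw : ‖w‖ * r ≤ 1) :
    HasFPowerSeriesOnBall (fun z ↦ log (1 + w * z))
      (ofScalars ℂ fun n ↦ (-1) ^ (n + 1) * w ^ n / n) 0 r where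
  r_le := by
    refine le_radius_of_bound _ 1 fun n ↦ ?_
    simp only [ofScalars_norm, norm_div, norm_mul, norm_pow, norm_neg, norm_one, one_pow, one_mul,
      Complex.norm_natCast]
    rw [div_mul_eq_mul_div, ← mul_pow]
    rcases n.eq_zero_or_pos with rfl | hn
    · simp
    · exact div_le_one_of_le₀ ((pow_le_one₀ (by positivity) hw).trans (by exact_mod_cast hn))
        (Nat.cast_nonneg n)
  r_pos := by exact_mod_cast hr
  hasSum {z} hz := by
    rw [Metric.eball_coe, mem_ball_zero_iff] at hz
    have hwz : ‖w * z‖ < 1 := by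
      have hr' : (0 : ℝ) < r := hr
      rw [norm_mul]
      nlinarith [mul_le_mul_of_nonneg_right hw (norm_nonneg z), norm_nonneg z]
    have hterm : (fun n ↦ ofScalars ℂ (fun n ↦ (-1) ^ (n + 1) * w ^ n / n) n fun _ ↦ z) =
        fun n : ℕ ↦ (-1) ^ (n + 1) * (w * z) ^ n / n := by
      funext n
      rw [ofScalars_apply_eq, smul_eq_mul]
      ring
    rw [zero_add, hterm]
    exact hasSum_taylorSeries_log hwz

theorem hasFPowerSeriesOnBall_sum_log_one_add_mul {W : Multiset ℂ} {r : ℝ≥0} (hr : 0 < r)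
    (hW : ∀ w ∈ W, ‖w‖ * r ≤ 1) :
    HasFPowerSeriesOnBall (fun z ↦ (W.map fun w ↦ log (1 + w * z)).sum)
      (ofScalars ℂ fun n : ℕ ↦ (W.map fun w ↦ (-1 : ℂ) ^ (n + 1) * w ^ n / n).sum) 0 r :=
  Multiset.hasFPowerSeriesOnBall_sum_ofScalars (by exact_mod_cast hr) fun w hw ↦
    hasFPowerSeriesOnBall_log_one_add_mul hr (hW w hw)

-- The `j = 0` term of `logTaylor` is `-1 / 0 = 0`.
theorem logTaylor_succ_eq_sum_Icc (k : ℕ) (w : ℂ) :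
    logTaylor (k + 1) w = ∑ s ∈ Finset.Icc 1 k, (-1) ^ (s + 1) * w ^ s / s := by
  rw [logTaylor, Finset.range_eq_Ico, Finset.sum_eq_sum_Ico_succ_bot k.succ_pos, zero_add,
    Nat.succ_eq_add_one, Finset.Ico_add_one_right_eq_Icc]
  simp

theorem norm_log_one_add_sub_logTaylor_le_of_norm_le_inv {w : ℂ} {β : ℝ} (hβ : 1 < β)
    (hw : ‖w‖ ≤ β⁻¹) (k : ℕ) :
    ‖log (1 + w) - logTaylor (k + 1) w‖ ≤ 1 / ((k + 1) * β ^ k * (β - 1)) := by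
  have hβ0 : 0 < β := by linarith
  have hβinv : β⁻¹ < 1 := inv_lt_one_of_one_lt₀ hβ
  calc _ ≤ ‖w‖ ^ (k + 1) * (1 - ‖w‖)⁻¹ / (k + 1) := norm_log_sub_logTaylor_le k (hw.trans_lt hβinv)
    _ ≤ β⁻¹ ^ (k + 1) * (1 - β⁻¹)⁻¹ / (k + 1) := by
      have : 0 < 1 - ‖w‖ := by linarith
      gcongr
    _ = _ := by
      have : β - 1 ≠ 0 := by linarith
      rw [inv_pow]
      field_simp
      ring

namespace Polynomial

noncomputable def negInvRoots {K : Type*} [Field K] (p : K[X]) : Multiset K :=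
  p.roots.map fun r ↦ -r⁻¹

theorem eval_eq_eval_zero_mul_prod_negInvRoots {K : Type*} [Field K] [IsAlgClosed K]
    {p : K[X]} (h0 : p.eval 0 ≠ 0) (z : K) :
    p.eval z = p.eval 0 * (p.negInvRoots.map fun w ↦ 1 + w * z).prod := by
  have hfactor (y : K) : p.eval y = p.leadingCoeff * (p.roots.map fun r ↦ y - r).prod := by
    conv_lhs => rw [(IsAlgClosed.splits p).eq_prod_roots]
    simp [eval_multiset_prod]
  rw [hfactor z, hfactor 0, mul_assoc, negInvRoots, Multiset.map_map, ← Multiset.prod_map_mul]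
  refine congrArg _ (congrArg _ (Multiset.map_congr rfl fun r hr ↦ ?_))
  have hr0 : r ≠ 0 := fun h ↦ h0 (by simpa [h] using isRoot_of_mem_roots hr)
  simp only [Function.comp_apply]
  field_simp
  ring

theorem norm_le_inv_of_mem_negInvRoots {p : ℂ[X]} {β : ℝ} (hβ : 0 < β)
    (hp : ∀ z : ℂ, ‖z‖ < β → p.eval z ≠ 0) {w : ℂ} (hw : w ∈ p.negInvRoots) : ‖w‖ ≤ β⁻¹ := by
  obtain ⟨r, hr, rfl⟩ := Multiset.mem_map.1 hw
  rw [norm_neg, norm_inv]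
  exact inv_anti₀ hβ (not_lt.1 fun h ↦ hp r h (isRoot_of_mem_roots hr))

end Polynomial

section LogOfPolynomial

variable {p : ℂ[X]} {β : ℝ} {f : ℂ → ℂ}

theorem hasFPowerSeriesOnBall_sum_log_negInvRoots (hβ : 0 < β)
    (hp : ∀ z : ℂ, ‖z‖ < β → p.eval z ≠ 0) :
    HasFPowerSeriesOnBall (fun z ↦ (p.negInvRoots.map fun w ↦ log (1 + w * z)).sum)
      (ofScalars ℂ fun n : ℕ ↦ (p.negInvRoots.map fun w ↦ (-1 : ℂ) ^ (n + 1) * w ^ n / n).sum)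
      0 β.toNNReal := by
  refine hasFPowerSeriesOnBall_sum_log_one_add_mul (by simpa) fun w hw ↦ ?_
  rw [Real.coe_toNNReal _ hβ.le]
  simpa [hβ.ne'] using
    mul_le_mul_of_nonneg_right (norm_le_inv_of_mem_negInvRoots hβ hp hw) hβ.le

theorem eqOn_add_sum_log_one_add_mul (hβ : 0 < β) (hp : ∀ z : ℂ, ‖z‖ < β → p.eval z ≠ 0)
    (hf : DifferentiableOn ℂ f (Metric.ball 0 β))
    (hfp : ∀ z ∈ Metric.ball (0 : ℂ) β, exp (f z) = p.eval z) :
    Set.EqOn f (fun z ↦ f 0 + (p.negInvRoots.map fun w ↦ log (1 + w * z)).sum)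
      (Metric.ball 0 β) := by
  have h0 : (0 : ℂ) ∈ Metric.ball 0 β := Metric.mem_ball_self hβ
  have hball : Metric.eball (0 : ℂ) β.toNNReal = Metric.ball 0 β := by
    rw [Metric.eball_coe, Real.coe_toNNReal _ hβ.le]
  refine Metric.isOpen_ball.eqOn_of_exp_eq (convex_ball 0 β).isPreconnected hf
    ((differentiableOn_const _).add
      (hball ▸ (hasFPowerSeriesOnBall_sum_log_negInvRoots hβ hp).differentiableOn))
    (fun z hz ↦ ?_) h0 (by simp)
  rw [hfp z hz, exp_add, hfp 0 h0, exp_multiset_sum,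
    eval_eq_eval_zero_mul_prod_negInvRoots (hp 0 (by simpa using hβ)) z, Multiset.map_map]
  refine congrArg _ (congrArg _ (Multiset.map_congr rfl fun w hw ↦ ?_))
  have hwz : ‖w * z‖ < 1 := by
    rw [norm_mul]
    refine (mul_le_mul_of_nonneg_right (norm_le_inv_of_mem_negInvRoots hβ hp hw)
      (norm_nonneg z)).trans_lt ?_
    rw [inv_mul_lt_iff₀ hβ, mul_one]
    exact mem_ball_zero_iff.1 hz
  exact (exp_log (slitPlane_ne_zero (mem_slitPlane_of_norm_lt_one hwz))).symm

theorem sub_taylor_eq_sum_log_one_add_sub_logTaylor (hβ : 1 < β)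
    (hp : ∀ z : ℂ, ‖z‖ < β → p.eval z ≠ 0) (hf : DifferentiableOn ℂ f (Metric.ball 0 β))
    (hfp : ∀ z ∈ Metric.ball (0 : ℂ) β, exp (f z) = p.eval z) (k : ℕ) :
    f 1 - (f 0 + ∑ s ∈ Finset.Icc 1 k, iteratedDeriv s f 0 / s !) =
      (p.negInvRoots.map fun w ↦ log (1 + w) - logTaylor (k + 1) w).sum := by
  have hβ0 : 0 < β := by linarith
  have hfG := eqOn_add_sum_log_one_add_mul hβ0 hp hf hfp
  have hcoeff : ∀ s ∈ Finset.Icc 1 k, iteratedDeriv s f 0 / s ! =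
      (p.negInvRoots.map fun w ↦ (-1 : ℂ) ^ (s + 1) * w ^ s / s).sum := fun s hs ↦ by
    rw [(hfG.eventuallyEq_of_mem (Metric.ball_mem_nhds 0 hβ0)).iteratedDeriv_eq,
      iteratedDeriv_const_add (Finset.mem_Icc.1 hs).1,
      (hasFPowerSeriesOnBall_sum_log_negInvRoots hβ0 hp).hasFPowerSeriesAt.iteratedDeriv_ofScalars,
      mul_div_cancel_left₀ _ (by exact_mod_cast s.factorial_ne_zero)]
  rw [Finset.sum_congr rfl hcoeff, Finset.sum_eq_multiset_sum, Multiset.sum_map_sum_map,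
    hfG (by simpa using hβ)]
  simp only [mul_one, logTaylor_succ_eq_sum_Icc, Finset.sum_eq_multiset_sum, Multiset.sum_map_sub]
  ring

end LogOfPolynomial

/-- If the polynomial `p` of degree at most `m` has no zeros in
the disc `|z| < β` (`β > 1`) and `f` is a branch of `log p` there, then the
degree-`k` Taylor polynomial `T_k` of `f` at `0` satisfies
`|f(1) - T_k(1)| ≤ m / ((k+1) β^k (β-1))`. -/
theorem stmt_10 (m k : ℕ) (p : Polynomial ℂ) (hdeg : p.natDegree ≤ m)
    (β : ℝ) (hβ : 1 < β)
    (hp : ∀ z : ℂ, ‖z‖ < β → p.eval z ≠ 0)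
    (f : ℂ → ℂ)
    (hf : DifferentiableOn ℂ f (Metric.ball (0 : ℂ) β))
    (hfp : ∀ z ∈ Metric.ball (0 : ℂ) β, Complex.exp (f z) = p.eval z) :
    ‖f 1 - (f 0 + ∑ s ∈ Finset.Icc 1 k, iteratedDeriv s f 0 / (Nat.factorial s))‖
      ≤ m / ((k + 1) * β ^ k * (β - 1)) := by
  have hcard : (p.negInvRoots.card : ℝ) ≤ m := by
    exact_mod_cast (Multiset.card_map _ _).trans_le ((card_roots' p).trans hdeg)
  have hβ1 : 0 < β - 1 := by linarith
  rw [sub_taylor_eq_sum_log_one_add_sub_logTaylor hβ hp hf hfp k, ← mul_one_div]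
  refine (Multiset.norm_sum_map_le_card_mul fun w hw ↦ ?_).trans (by gcongr)
  exact norm_log_one_add_sub_logTaylor_le_of_norm_le_inv hβ
    (norm_le_inv_of_mem_negInvRoots (by linarith) hp hw) k
end

section
/- Let $p$ be a complex polynomial of degree at most $m$ with $p(z)\neq 0$ for $|z|<\beta$ where $\beta>1$, and let $z_1,\ldots,z_d$ be its roots (with multiplicity), so $|z_j|\ge\beta$ for all $j$. Then for any branch $f$ of $\ln p$ on the disc $|z|<\beta$ and any $k\ge 1$, the Taylor remainder satisfies $\left|f(1)-f(0)-\sum_{s=1}^k \frac{f^{(s)}(0)}{s!}\right| \le \sum_{j=1}^{d} \sum_{s=k+1}^{\infty}\frac{1}{s\,|z_j|^{s}} \le \frac{m}{(k+1)\beta^{k}(\beta-1)}$. -/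
/-!
Because `exp ∘ f = p`, the logarithmic derivative gives `f' = p'/p = ∑ⱼ 1/(z - zⱼ)`, so for
`s ≥ 1` the Taylor coefficient `f⁽ˢ⁾(0)/s!` is `-∑ⱼ 1/(s zⱼˢ)`. As `f` is holomorphic on a disc of
radius `β > 1`, its Taylor series at `0` converges to `f 1`, and the remainder is the tail of that
series, bounded termwise. Each tail `∑_{s>k} 1/(s |zⱼ|ˢ)` is dominated by a geometric series in
`1/β`, and there are at most `m` roots.
-/

open Polynomial Filter Topology Nat

theorem Multiset.hasSum_sum_map {ι α M : Type*} [AddCommMonoid M] [TopologicalSpace M]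
    [ContinuousAdd M] {s : Multiset ι} {g : ι → α → M} {a : ι → M}
    (h : ∀ i ∈ s, HasSum (g i) (a i)) :
    HasSum (fun x => (s.map fun i => g i x).sum) (s.map a).sum := by
  induction s using Multiset.induction_on with
  | empty => simp [hasSum_zero]
  | cons i s ih =>
    simp only [Multiset.map_cons, Multiset.sum_cons]
    exact (h i (s.mem_cons_self i)).add (ih fun j hj => h j (Multiset.mem_cons_of_mem hj))

theorem iteratedDeriv_multiset_sum_map {𝕜 F ι : Type*} [NontriviallyNormedField 𝕜]
    [NormedAddCommGroup F] [NormedSpace 𝕜 F] {s : Multiset ι} {g : ι → 𝕜 → F} {x : 𝕜} {n : ℕ}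
    (h : ∀ i ∈ s, ContDiffAt 𝕜 n (g i) x) :
    iteratedDeriv n (fun z => (s.map fun i => g i z).sum) x
      = (s.map fun i => iteratedDeriv n (g i) x).sum := by
  classical
  simp_rw [Finset.sum_multiset_map_count]
  rw [iteratedDeriv_fun_sum fun i hi => (h i (Multiset.mem_toFinset.mp hi)).const_smul _]
  exact Finset.sum_congr rfl fun i hi =>
    iteratedDeriv_fun_const_smul (h i (Multiset.mem_toFinset.mp hi)) _

theorem Complex.norm_iteratedDeriv_inv_sub_zero (n : ℕ) (w : ℂ) :
    ‖iteratedDeriv n (fun z => (z - w)⁻¹) 0‖ = n ! / ‖w‖ ^ (n + 1) := by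
  have h := congrFun (iter_deriv_inv_linear_sub n (1 : ℂ) w) 0
  simp only [one_mul, one_pow, mul_one, zero_sub] at h
  rw [iteratedDeriv_eq_iterate, h]
  have hexp : (-1 - n : ℤ) = -((n + 1 : ℕ) : ℤ) := by push_cast; ring
  rw [norm_mul, norm_mul, norm_zpow, hexp, zpow_neg, zpow_natCast]
  simp [div_eq_mul_inv]

theorem Complex.hasSum_taylorRemainder_one {f : ℂ → ℂ} {r : ℝ} (hr : 1 < r)
    (hf : DifferentiableOn ℂ f (Metric.ball 0 r)) (k : ℕ) :
    HasSum (fun n => iteratedDeriv (n + k + 1) f 0 / (n + k + 1)!)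
      (f 1 - f 0 - ∑ s ∈ Finset.Icc 1 k, iteratedDeriv s f 0 / s !) := by
  have htaylor : HasSum (fun n => iteratedDeriv n f 0 / n !) (f 1) := by
    simpa [div_eq_inv_mul] using
      Complex.hasSum_taylorSeries_on_ball hf (z := 1) (by simpa using hr)
  have hsplit : ∑ s ∈ Finset.range (k + 1), iteratedDeriv s f 0 / s !
      = f 0 + ∑ s ∈ Finset.Icc 1 k, iteratedDeriv s f 0 / s ! := by
    rw [Finset.range_eq_Ico, Finset.sum_eq_sum_Ico_succ_bot (Nat.succ_pos k)]
    simp [Finset.Ico_add_one_right_eq_Icc]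
  rw [sub_sub, ← hsplit]
  exact (hasSum_nat_add_iff' (k + 1)).mpr htaylor

namespace Polynomial

theorem le_norm_of_mem_roots_of_exp_eq {p : ℂ[X]} {f : ℂ → ℂ} {β : ℝ}
    (hfp : ∀ z ∈ Metric.ball (0 : ℂ) β, Complex.exp (f z) = p.eval z) {w : ℂ}
    (hw : w ∈ p.roots) : β ≤ ‖w‖ := by
  by_contra! hlt
  have := hfp w (mem_ball_zero_iff.mpr hlt)
  rw [(mem_roots'.mp hw).2] at this
  exact Complex.exp_ne_zero _ this

theorem deriv_eq_sum_roots_of_exp_eq {p : ℂ[X]} {f : ℂ → ℂ} {z : ℂ}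
    (hf : DifferentiableAt ℂ f z) (hfp : ∀ᶠ y in 𝓝 z, Complex.exp (f y) = p.eval y) :
    deriv f z = (p.roots.map fun w => (z - w)⁻¹).sum := by
  have hpz : p.eval z ≠ 0 := hfp.self_of_nhds ▸ Complex.exp_ne_zero _
  have hexp : Complex.exp (f z) * deriv f z = p.derivative.eval z :=
    hf.hasDerivAt.cexp.unique ((p.hasDerivAt z).congr_of_eventuallyEq hfp)
  simp_rw [← one_div, ← (IsAlgClosed.splits p).eval_derivative_div_eval_of_ne_zero hpz, ← hexp,
    hfp.self_of_nhds]
  field_simp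

theorem norm_iteratedDeriv_succ_div_factorial_le {p : ℂ[X]} {f : ℂ → ℂ} {β : ℝ} (hβ : 0 < β)
    (hf : DifferentiableOn ℂ f (Metric.ball 0 β))
    (hfp : ∀ z ∈ Metric.ball (0 : ℂ) β, Complex.exp (f z) = p.eval z) (n : ℕ) :
    ‖iteratedDeriv (n + 1) f 0 / (n + 1)!‖
      ≤ (p.roots.map fun w => 1 / (((n + 1 : ℕ) : ℝ) * ‖w‖ ^ (n + 1))).sum := by
  have hroots : ∀ w ∈ p.roots, w ≠ 0 := fun w hw h => by
    have := le_norm_of_mem_roots_of_exp_eq hfp hw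
    rw [h, norm_zero] at this
    linarith
  have hderiv : deriv f =ᶠ[𝓝 0] fun z => (p.roots.map fun w => (z - w)⁻¹).sum := by
    filter_upwards [Metric.isOpen_ball.mem_nhds (Metric.mem_ball_self hβ)] with z hz
    have hnhds := Metric.isOpen_ball.mem_nhds hz
    exact deriv_eq_sum_roots_of_exp_eq (hf.differentiableAt hnhds)
      (eventually_of_mem hnhds hfp)
  rw [iteratedDeriv_succ', hderiv.iteratedDeriv_eq, iteratedDeriv_multiset_sum_map, norm_div]
  · have hterm : ∀ w : ℂ, ‖iteratedDeriv n (fun z => (z - w)⁻¹) 0‖ / (n + 1)!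
        = 1 / (((n + 1 : ℕ) : ℝ) * ‖w‖ ^ (n + 1)) := by
      intro w
      rw [Complex.norm_iteratedDeriv_inv_sub_zero, Nat.factorial_succ]
      push_cast
      field_simp
    calc _ ≤ (p.roots.map fun w => ‖iteratedDeriv n (fun z => (z - w)⁻¹) 0‖).sum / (n + 1)! := by
          rw [Complex.norm_natCast]
          gcongr
          simpa [Multiset.map_map] using norm_multiset_sum_le
            (p.roots.map fun w => iteratedDeriv n (fun z => (z - w)⁻¹) 0)
      _ = _ := by simp_rw [← Multiset.sum_map_div, hterm]
  · intro w hw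
    exact (contDiffAt_id.sub contDiffAt_const).inv (by simpa using hroots w hw)

end Polynomial

namespace Real

theorem one_div_mul_pow_le_geometric {β r : ℝ} (hβ : 0 < β) (hr : β ≤ r) (k n : ℕ) :
    1 / (((n + k + 1 : ℕ) : ℝ) * r ^ (n + k + 1)) ≤ 1 / ((k + 1) * β ^ (k + 1)) * β⁻¹ ^ n := by
  rw [inv_pow, ← div_eq_mul_inv, div_div]
  apply one_div_le_one_div_of_le (by positivity)
  calc ((k : ℝ) + 1) * β ^ (k + 1) * β ^ n = (k + 1) * β ^ (n + k + 1) := by ring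
    _ ≤ ((n + k + 1 : ℕ) : ℝ) * r ^ (n + k + 1) := by push_cast; gcongr; linarith

theorem hasSum_geometric_tail_majorant {β : ℝ} (hβ : 1 < β) (k : ℕ) :
    HasSum (fun n : ℕ => 1 / ((k + 1) * β ^ (k + 1)) * β⁻¹ ^ n)
      (1 / ((k + 1) * β ^ k * (β - 1))) := by
  have hβ0 : 0 < β := by linarith
  have hβ1 : β - 1 ≠ 0 := by linarith
  have h := (hasSum_geometric_of_lt_one (by positivity) (inv_lt_one_of_one_lt₀ hβ)).mul_left
    (1 / ((k + 1) * β ^ (k + 1)))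
  rwa [show 1 / ((k + 1) * β ^ (k + 1)) * (1 - β⁻¹)⁻¹ = 1 / ((k + 1) * β ^ k * (β - 1)) by
    field_simp; ring] at h

theorem summable_one_div_mul_pow_tail {β r : ℝ} (hβ : 1 < β) (hr : β ≤ r) (k : ℕ) :
    Summable (fun n : ℕ => 1 / (((n + k + 1 : ℕ) : ℝ) * r ^ (n + k + 1))) :=
  have hr0 : 0 < r := by linarith
  (hasSum_geometric_tail_majorant hβ k).summable.of_nonneg_of_le (fun _ => by positivity)
    (one_div_mul_pow_le_geometric (by linarith) hr k)

theorem tsum_one_div_mul_pow_tail_le {β r : ℝ} (hβ : 1 < β) (hr : β ≤ r) (k : ℕ) :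
    ∑' n : ℕ, 1 / (((n + k + 1 : ℕ) : ℝ) * r ^ (n + k + 1)) ≤ 1 / ((k + 1) * β ^ k * (β - 1)) :=
  hasSum_le (one_div_mul_pow_le_geometric (by linarith) hr k)
    (summable_one_div_mul_pow_tail hβ hr k).hasSum (hasSum_geometric_tail_majorant hβ k)

end Real

theorem stmt_11_general (m k : ℕ) (p : Polynomial ℂ) (hdeg : p.natDegree ≤ m)
    (β : ℝ) (hβ : 1 < β)
    (f : ℂ → ℂ)
    (hf : DifferentiableOn ℂ f (Metric.ball (0 : ℂ) β))
    (hfp : ∀ z ∈ Metric.ball (0 : ℂ) β, Complex.exp (f z) = p.eval z) :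
    (∀ z ∈ p.roots, β ≤ ‖z‖) ∧
    ‖f 1 - f 0 - ∑ s ∈ Finset.Icc 1 k, iteratedDeriv s f 0 / (Nat.factorial s)‖
      ≤ (p.roots.map (fun z : ℂ =>
          ∑' s : ℕ, 1 / (((s + k + 1 : ℕ) : ℝ) * ‖z‖ ^ (s + k + 1)))).sum ∧
    (p.roots.map (fun z : ℂ =>
        ∑' s : ℕ, 1 / (((s + k + 1 : ℕ) : ℝ) * ‖z‖ ^ (s + k + 1)))).sum
      ≤ m / ((k + 1) * β ^ k * (β - 1)) := by
  have hroots : ∀ z ∈ p.roots, β ≤ ‖z‖ := fun z hz => le_norm_of_mem_roots_of_exp_eq hfp hz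
  refine ⟨hroots, ?_, ?_⟩
  · rw [← (Complex.hasSum_taylorRemainder_one hβ hf k).tsum_eq]
    refine tsum_of_norm_bounded (Multiset.hasSum_sum_map fun w hw =>
      (Real.summable_one_div_mul_pow_tail hβ (hroots w hw) k).hasSum) fun n => ?_
    exact norm_iteratedDeriv_succ_div_factorial_le (by linarith) hf hfp (n + k)
  · have hcard : (Multiset.card p.roots : ℝ) ≤ m := by
      exact_mod_cast (card_roots' p).trans hdeg
    have hβ1 : 0 < β - 1 := by linarith
    calc _ ≤ Multiset.card p.roots • (1 / ((k + 1) * β ^ k * (β - 1))) := by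
          rw [← Multiset.card_map (fun z : ℂ =>
            ∑' s : ℕ, 1 / (((s + k + 1 : ℕ) : ℝ) * ‖z‖ ^ (s + k + 1)))]
          refine Multiset.sum_le_card_nsmul _ _ fun x hx => ?_
          obtain ⟨w, hw, rfl⟩ := Multiset.mem_map.mp hx
          exact Real.tsum_one_div_mul_pow_tail_le hβ (hroots w hw) k
      _ ≤ m * (1 / ((k + 1) * β ^ k * (β - 1))) := by
          rw [nsmul_eq_mul]
          gcongr
      _ = _ := mul_one_div _ _

/-- With `p` of degree at most `m`, nonvanishing on `|z| < β`
(`β > 1`), all roots `z_j` of `p` satisfy `|z_j| ≥ β`, and for any branch `f`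
of `log p` on the disc and `k ≥ 1`, the Taylor remainder at `1` is bounded by
`∑_j ∑_{s > k} 1/(s |z_j|^s)`, which is at most `m/((k+1) β^k (β-1))`. -/
theorem stmt_11 (m k : ℕ) (hk : 1 ≤ k) (p : Polynomial ℂ) (hdeg : p.natDegree ≤ m)
    (β : ℝ) (hβ : 1 < β)
    (hp : ∀ z : ℂ, ‖z‖ < β → p.eval z ≠ 0)
    (f : ℂ → ℂ)
    (hf : DifferentiableOn ℂ f (Metric.ball (0 : ℂ) β))
    (hfp : ∀ z ∈ Metric.ball (0 : ℂ) β, Complex.exp (f z) = p.eval z) :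
    (∀ z ∈ p.roots, β ≤ ‖z‖) ∧
    ‖f 1 - f 0 - ∑ s ∈ Finset.Icc 1 k, iteratedDeriv s f 0 / (Nat.factorial s)‖
      ≤ (p.roots.map (fun z : ℂ =>
          ∑' s : ℕ, 1 / (((s + k + 1 : ℕ) : ℝ) * ‖z‖ ^ (s + k + 1)))).sum ∧
    (p.roots.map (fun z : ℂ =>
        ∑' s : ℕ, 1 / (((s + k + 1 : ℕ) : ℝ) * ‖z‖ ^ (s + k + 1)))).sum
      ≤ m / ((k + 1) * β ^ k * (β - 1)) :=
  stmt_11_general m k p hdeg β hβ f hf hfp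
end

section
/- Let $G=(V,E)$ be a finite simple graph whose vertices are all nonempty ordered tuples of distinct indices from $\{1,\ldots,m\}$, with two tuples adjacent iff they share a common index. Fix $r\ge 1$ and suppose each index $k\in\{1,\ldots,m\}$ 'interacts' with at most $r$ other indices (given by a symmetric relation $\sim$), and call a tuple $(k_1,\ldots,k_q)$ 'admissible' if consecutive indices interact: $k_i \sim k_{i+1}$ for all $i$. Then for any vertex $v$ of level $s$ (an $s$-tuple) and any $q\ge 1$, the number of admissible tuples of level $q$ adjacent to $v$ (counting $v$ itself when $q = s$) is at most $s\,q\,r^{q-1}$. -/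
/-- step function: move one position toward `i`. -/
private def stmt17nxt (q : ℕ) (i t : Fin q) : Fin q :=
  if h : (t : ℕ) < (i : ℕ) then ⟨t + 1, by have := i.isLt; omega⟩
  else ⟨t - 1, by have := t.isLt; omega⟩

private lemma stmt17_inj_subtype_eq {α β γ : Type*} {P : α → β → Prop}
    (φ : ∀ k, {j : β // P k j} → γ) (hφ : ∀ k, Function.Injective (φ k))
    {k k' : α} (hk : k = k') {a b : β} (pa : P k a) (pb : P k' b)
    (h : φ k ⟨a, pa⟩ = φ k' ⟨b, pb⟩) : a = b := by
  subst hk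
  exact congrArg Subtype.val (hφ k h)

private lemma stmt17_ncard_iUnion_le {α ι : Type*} [Fintype ι] [Finite α] (f : ι → Set α) :
    (⋃ i, f i).ncard ≤ ∑ i, (f i).ncard := by
  classical
  have hf : ∀ i, (f i).Finite := fun i => Set.toFinite _
  have h1 : (⋃ i, f i) = ↑(Finset.univ.biUnion fun i => (hf i).toFinset) := by
    ext x; simp [Set.Finite.mem_toFinset]
  rw [h1, Set.ncard_coe_finset]
  refine Finset.card_biUnion_le.trans ?_
  refine Finset.sum_le_sum fun i _ => ?_
  rw [Set.ncard_eq_toFinset_card _ (hf i)]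

/-- Vertices are nonempty tuples of distinct indices from
`{1,…,m}`; two tuples are adjacent iff they share an index.  Suppose each index
interacts (symmetric relation `interact`) with at most `r` other indices, and
call a tuple admissible if consecutive entries interact.  Then for a vertex
`v` of level `s` and any `q ≥ 1`, the number of admissible tuples of level `q`
adjacent to `v` (counting `v` itself when `q = s`) is at most `s q r^{q-1}`. -/
theorem stmt_17 (m r s q : ℕ) (hq : 1 ≤ q)
    (interact : Fin m → Fin m → Prop)
    (hsymmrel : ∀ i j, interact i j → interact j i)
    (hdeg : ∀ k : Fin m, Set.ncard {j : Fin m | j ≠ k ∧ interact k j} ≤ r)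
    (v : Fin s → Fin m) (hv : Function.Injective v) :
    Set.ncard {u : Fin q → Fin m |
        Function.Injective u ∧
        (∀ (i : Fin q) (h : (i : ℕ) + 1 < q), interact (u i) (u ⟨i + 1, h⟩)) ∧
        (∃ i j, u i = v j)}
      ≤ s * q * r ^ (q - 1) := by
  classical
  -- enumeration of neighbors
  have hφ : ∀ k : Fin m, ∃ f : {j : Fin m // j ≠ k ∧ interact k j} → Fin r,
      Function.Injective f := by
    intro k
    letI := Fintype.ofFinite {j : Fin m // j ≠ k ∧ interact k j}
    have hc : Fintype.card {j : Fin m // j ≠ k ∧ interact k j} ≤ r := by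
      rw [← Nat.card_eq_fintype_card]
      have := Nat.card_coe_set_eq {j : Fin m | j ≠ k ∧ interact k j}
      exact this.le.trans (hdeg k)
    obtain ⟨f⟩ := Function.Embedding.nonempty_of_card_le
      (by simpa using hc : Fintype.card {j : Fin m // j ≠ k ∧ interact k j} ≤ Fintype.card (Fin r))
    exact ⟨f, f.injective⟩
  choose φ hφinj using hφ
  set T : Fin q × Fin s → Set (Fin q → Fin m) := fun p =>
    {u : Fin q → Fin m |
        Function.Injective u ∧
        (∀ (i : Fin q) (h : (i : ℕ) + 1 < q), interact (u i) (u ⟨i + 1, h⟩)) ∧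
        u p.1 = v p.2} with hT
  -- membership facts for the neighbor codes
  have pf : ∀ (u : Fin q → Fin m), Function.Injective u →
      (∀ (a : Fin q) (h : (a : ℕ) + 1 < q), interact (u a) (u ⟨a + 1, h⟩)) →
      ∀ (i t : Fin q), t ≠ i →
        u t ≠ u (stmt17nxt q i t) ∧ interact (u (stmt17nxt q i t)) (u t) := by
    intro u huinj hadm i t ht
    have htne : (t : ℕ) ≠ (i : ℕ) := fun h => ht (Fin.ext h)
    by_cases h : (t : ℕ) < (i : ℕ)
    · have hnxt : stmt17nxt q i t = ⟨t + 1, by have := i.isLt; omega⟩ := by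
        simp [stmt17nxt, h]
      rw [hnxt]
      constructor
      · intro he
        have := huinj he
        have : (t : ℕ) = (t : ℕ) + 1 := congrArg Fin.val this
        omega
      · have h1 : (t : ℕ) + 1 < q := by have := i.isLt; omega
        exact hsymmrel _ _ (hadm t h1)
    · have h1 : (i : ℕ) < (t : ℕ) := by omega
      have hnxt : stmt17nxt q i t = ⟨t - 1, by have := t.isLt; omega⟩ := by
        simp [stmt17nxt, h]
      rw [hnxt]
      constructor
      · intro he
        have := congrArg Fin.val (huinj he)
        simp only at this
        omega
      · have h2 : ((⟨t - 1, by have := t.isLt; omega⟩ : Fin q) : ℕ) + 1 < q := by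
          have := t.isLt; simp only; omega
        have := hadm ⟨t - 1, by have := t.isLt; omega⟩ h2
        have he : (⟨((⟨t - 1, by have := t.isLt; omega⟩ : Fin q) : ℕ) + 1, h2⟩ : Fin q) = t := by
          apply Fin.ext; simp only; omega
        rwa [he] at this
  -- each piece is small
  have hpiece : ∀ p : Fin q × Fin s, (T p).ncard ≤ r ^ (q - 1) := by
    rintro ⟨i, j⟩
    have hcard : Nat.card ({t : Fin q // t ≠ i} → Fin r) = r ^ (q - 1) := by
      rw [Nat.card_eq_fintype_card, Fintype.card_fun, Fintype.card_fin]
      congr 1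
      have h1 : Fintype.card {t : Fin q // ¬ t = i} =
          Fintype.card (Fin q) - Fintype.card {t : Fin q // t = i} :=
        Fintype.card_subtype_compl _
      simpa [Fintype.card_subtype_eq] using h1
    rw [← hcard, ← Nat.card_coe_set_eq]
    set G : ↥(T (i, j)) → ({t : Fin q // t ≠ i} → Fin r) := fun x t =>
      φ (x.1 (stmt17nxt q i t.1))
        ⟨x.1 t.1, pf x.1 x.2.1 x.2.2.1 i t.1 t.2⟩ with hG
    refine Nat.card_le_card_of_injective G ?_
    intro x y hxy
    apply Subtype.ext
    funext t
    -- induction on distance to i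
    have key : ∀ d : ℕ, ∀ t : Fin q, ((i : ℕ) - t) + ((t : ℕ) - i) = d →
        x.1 t = y.1 t := by
      intro d
      induction d with
      | zero =>
        intro t htd
        have : t = i := Fin.ext (by omega)
        rw [this, x.2.2.2, y.2.2.2]
      | succ d ih =>
        intro t htd
        have htne : t ≠ i := by
          intro h; rw [h] at htd; omega
        have hdist : ((i : ℕ) - (stmt17nxt q i t : ℕ)) + ((stmt17nxt q i t : ℕ) - i) = d := by
          by_cases h : (t : ℕ) < (i : ℕ)
          · have : stmt17nxt q i t = ⟨t + 1, by have := i.isLt; omega⟩ := by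
              simp [stmt17nxt, h]
            rw [this]; simp only; omega
          · have : stmt17nxt q i t = ⟨t - 1, by have := t.isLt; omega⟩ := by
              simp [stmt17nxt, h]
            rw [this]; simp only
            have htne' : (t : ℕ) ≠ (i : ℕ) := fun hh => htne (Fin.ext hh)
            omega
        have hnxt : x.1 (stmt17nxt q i t) = y.1 (stmt17nxt q i t) := ih _ hdist
        have hcode : G x ⟨t, htne⟩ = G y ⟨t, htne⟩ := by rw [hxy]
        exact stmt17_inj_subtype_eq φ hφinj hnxt _ _ hcode
    exact key _ t rfl
  -- union and sum
  have hsub : {u : Fin q → Fin m |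
        Function.Injective u ∧
        (∀ (i : Fin q) (h : (i : ℕ) + 1 < q), interact (u i) (u ⟨i + 1, h⟩)) ∧
        (∃ i j, u i = v j)} ⊆ ⋃ p : Fin q × Fin s, T p := by
    rintro u ⟨h1, h2, i, j, h3⟩
    exact Set.mem_iUnion.mpr ⟨(i, j), h1, h2, h3⟩
  calc Set.ncard _ ≤ (⋃ p : Fin q × Fin s, T p).ncard :=
        Set.ncard_le_ncard hsub (Set.toFinite _)
    _ ≤ ∑ p : Fin q × Fin s, (T p).ncard := stmt17_ncard_iUnion_le T
    _ ≤ ∑ _p : Fin q × Fin s, r ^ (q - 1) := Finset.sum_le_sum fun p _ => hpiece p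
    _ = s * q * r ^ (q - 1) := by
        simp [Finset.sum_const, Finset.card_univ, mul_assoc, mul_comm, mul_left_comm]
end
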